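/- For any real symmetric n×n matrix A and any real symmetric matrix B, the Frobenius norm of B is less than or equal to the Frobenius norm of e^{−A/2}·(D e^A(B))·e^{−A/2}, where D e^A(B) is the derivative of the matrix exponential at A in direction B. -/

import Mathlib

/-!
Diagonalise `A = U Λ Uᵀ` with `U` orthogonal. Conjugation by `U` commutes with `exp` and
preserves the Frobenius norm, so we may take `A = diag λ`. Duhamel's formula gives
`D e^A(B) = ∫₀¹ e^{sA} B e^{(1-s)A} ds`; for diagonal `A` the `(i, j)` entry of
`e^{-A/2} D e^{-A/2}` is therefore `B i j` times
`e^{-(λᵢ+λⱼ)/2} ∫₀¹ e^{sλᵢ + (1-s)λⱼ} ds`, and this factor is at least `1` because `exp` lies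
above its tangent line at `(λᵢ + λⱼ)/2`. Comparing the entries one by one gives the inequality.
-/

open Matrix NormedSpace

attribute [local instance] Matrix.normedAddCommGroup Matrix.normedSpace

/-- The Frobenius norm of a real square matrix, `‖M‖_F = (tr Mᵀ M)^{1/2}`. -/
noncomputable def frob {n : ℕ} (M : Matrix (Fin n) (Fin n) ℝ) : ℝ :=
  Real.sqrt ((Mᵀ * M).trace)

open Unitary

theorem hasDerivAt_of_eq_add_sub_smul {𝕜 F : Type*} [NontriviallyNormedField 𝕜]
    [NormedAddCommGroup F] [NormedSpace 𝕜 F] {f H : 𝕜 → F} {x : 𝕜}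
    (hf : ∀ t, f t = f x + (t - x) • H t) (hH : ContinuousAt H x) : HasDerivAt f (H x) x := by
  refine hasDerivAt_iff_tendsto_slope.mpr <| (hH.tendsto.mono_left nhdsWithin_le_nhds).congr' ?_
  filter_upwards [self_mem_nhdsWithin] with t ht
  rw [slope_def_module, hf t, add_sub_cancel_left, smul_smul,
    inv_mul_cancel₀ (sub_ne_zero.mpr ht), one_smul]

section BanachAlgebra

variable {𝔸 : Type*} [NormedRing 𝔸] [NormedAlgebra ℝ 𝔸] [CompleteSpace 𝔸]

-- `NormedSpace.exp_continuous` asks for a normed `ℚ`-algebra structure instead.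
theorem exp_continuous_of_real : Continuous (exp : 𝔸 → 𝔸) :=
  continuous_iff_continuousAt.2 fun x => (exp_analytic (𝕂 := ℝ) x).continuousAt

theorem continuous_exp_smul (X : 𝔸) : Continuous fun s : ℝ => exp (s • X) :=
  exp_continuous_of_real.comp (continuous_id.smul continuous_const)

theorem continuous_exp_smul_mul_mul_exp_smul (X Y A : 𝔸) :
    Continuous fun s : ℝ => exp (s • X) * Y * exp ((1 - s) • A) :=
  ((continuous_exp_smul X).mul continuous_const).mul
    ((continuous_exp_smul A).comp (continuous_const.sub continuous_id))

-- Duhamel's formula: integrate the derivative of `s ↦ exp (s • X) * exp ((1 - s) • A)`.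
theorem exp_sub_exp_eq_integral (X A : 𝔸) :
    exp X - exp A = ∫ s in (0:ℝ)..1, exp (s • X) * (X - A) * exp ((1 - s) • A) := by
  have hderiv (s : ℝ) : HasDerivAt (fun s : ℝ => exp (s • X) * exp ((1 - s) • A))
      (exp (s • X) * (X - A) * exp ((1 - s) • A)) s := by
    have hA : HasDerivAt (fun s : ℝ => exp ((1 - s) • A)) (-(A * exp ((1 - s) • A))) s :=
      ((hasDerivAt_exp_smul_const' A (1 - s)).scomp s
        ((hasDerivAt_id s).const_sub 1)).congr_deriv (neg_one_smul ℝ _)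
    refine ((hasDerivAt_exp_smul_const X s).mul hA).congr_deriv ?_
    noncomm_ring
  rw [intervalIntegral.integral_eq_sub_of_hasDerivAt (fun s _ => hderiv s)
    ((continuous_exp_smul_mul_mul_exp_smul X (X - A) A).intervalIntegrable 0 1)]
  simp

theorem hasDerivAt_exp_add_smul (A B : 𝔸) :
    HasDerivAt (fun t : ℝ => exp (A + t • B))
      (∫ s in (0:ℝ)..1, exp (s • A) * B * exp ((1 - s) • A)) 0 := by
  set H : ℝ → 𝔸 := fun t => ∫ s in (0:ℝ)..1, exp (s • (A + t • B)) * B * exp ((1 - s) • A)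
  have hH : Continuous H := by
    refine intervalIntegral.continuous_parametric_intervalIntegral_of_continuous' ?_ 0 1
    exact ((exp_continuous_of_real.comp (continuous_snd.smul (continuous_const.add
      (continuous_fst.smul continuous_const)))).mul continuous_const).mul
      ((continuous_exp_smul A).comp (continuous_const.sub continuous_snd))
  have h := hasDerivAt_of_eq_add_sub_smul (f := fun t : ℝ => exp (A + t • B)) (H := H) (x := 0)
    (fun t => ?_) hH.continuousAt
  · simpa [H] using h
  · rw [zero_smul, add_zero, sub_zero, ← sub_eq_iff_eq_add', exp_sub_exp_eq_integral,
      add_sub_cancel_left, ← intervalIntegral.integral_smul]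
    simp only [mul_smul_comm, smul_mul_assoc]

theorem hasDerivAt_map_exp_add_smul {F : Type*} [NormedAddCommGroup F] [NormedSpace ℝ F]
    [CompleteSpace F] (L : 𝔸 →L[ℝ] F) (A B : 𝔸) :
    HasDerivAt (fun t : ℝ => L (exp (A + t • B)))
      (∫ s in (0:ℝ)..1, L (exp (s • A) * B * exp ((1 - s) • A))) 0 := by
  rw [L.intervalIntegral_comp_comm
    ((continuous_exp_smul_mul_mul_exp_smul A B A).intervalIntegrable 0 1)]
  exact L.hasFDerivAt.comp_hasDerivAt 0 (hasDerivAt_exp_add_smul A B)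

end BanachAlgebra

theorem Real.exp_add_div_two_le_integral_exp (a b : ℝ) :
    Real.exp ((a + b) / 2) ≤ ∫ s in (0:ℝ)..1, Real.exp (s * a + (1 - s) * b) := by
  have htangent (s : ℝ) :
      Real.exp ((a + b) / 2) * (1 + (s - 1 / 2) * (a - b)) ≤ Real.exp (s * a + (1 - s) * b) := by
    calc _ ≤ Real.exp ((a + b) / 2) * Real.exp ((s - 1 / 2) * (a - b)) := by
          gcongr; linarith [Real.add_one_le_exp ((s - 1 / 2) * (a - b))]
      _ = _ := by rw [← Real.exp_add]; ring_nf
  calc Real.exp ((a + b) / 2)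
      = ∫ s in (0:ℝ)..1, Real.exp ((a + b) / 2) * (1 + (s - 1 / 2) * (a - b)) := by
        rw [intervalIntegral.integral_const_mul, intervalIntegral.integral_add (by simp)
          (Continuous.intervalIntegrable (by fun_prop) _ _)]
        norm_num [intervalIntegral.integral_mul_const, intervalIntegral.integral_comp_sub_right]
    _ ≤ _ := intervalIntegral.integral_mono_on zero_le_one
        (Continuous.intervalIntegrable (by fun_prop) 0 1)
        (Continuous.intervalIntegrable (by fun_prop) 0 1) fun s _ => htangent s

namespace Matrix

variable {m : Type*} [Fintype m] [DecidableEq m]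

theorem exp_smul_diagonal (r : ℝ) (d : m → ℝ) :
    exp (r • diagonal d) = diagonal fun i => Real.exp (r * d i) := by
  rw [← diagonal_smul, exp_diagonal, Pi.exp_def, Real.exp_eq_exp_ℝ]
  rfl

theorem hasDerivAt_exp_diagonal_add_smul_apply (d : m → ℝ) (C : Matrix m m ℝ) (i j : m) :
    HasDerivAt (fun t : ℝ => exp (diagonal d + t • C) i j)
      ((∫ s in (0:ℝ)..1, Real.exp (s * d i + (1 - s) * d j)) * C i j) 0 := by
  -- The operator norm only serves to make matrices a Banach algebra; `HasDerivAt` and the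
  -- resulting real integral do not depend on it.
  have h : HasDerivAt (fun t : ℝ => exp (diagonal d + t • C) i j)
      (∫ s in (0:ℝ)..1, (exp (s • diagonal d) * C * exp ((1 - s) • diagonal d)) i j) 0 := by
    open scoped Matrix.Norms.Operator in
    exact hasDerivAt_map_exp_add_smul (LinearMap.toContinuousLinearMap (entryLinearMap ℝ ℝ i j))
      (diagonal d) C
  simp only [exp_smul_diagonal, diagonal_mul, mul_diagonal] at h
  convert h using 1
  rw [← intervalIntegral.integral_mul_const]
  congr 1 with s
  rw [Real.exp_add]
  ring

theorem exp_conjStarAlgAut {𝕜 : Type*} [RCLike 𝕜] (u : unitary (Matrix m m 𝕜))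
    (X : Matrix m m 𝕜) : exp (conjStarAlgAut 𝕜 _ u X) = conjStarAlgAut 𝕜 _ u (exp X) := by
  simpa using Matrix.exp_units_conj (Unitary.toUnits u) X

end Matrix

theorem frob_le_frob_of_abs_le {n : ℕ} {M N : Matrix (Fin n) (Fin n) ℝ}
    (h : ∀ i j, |M i j| ≤ |N i j|) : frob M ≤ frob N := by
  simp only [frob, trace, diag_apply, mul_apply, transpose_apply]
  refine Real.sqrt_le_sqrt (Finset.sum_le_sum fun i _ => Finset.sum_le_sum fun j _ => ?_)
  simpa only [sq] using sq_le_sq.mpr (h j i)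

theorem frob_conjStarAlgAut {n : ℕ} (u : unitary (Matrix (Fin n) (Fin n) ℝ))
    (M : Matrix (Fin n) (Fin n) ℝ) : frob (conjStarAlgAut ℝ _ u M) = frob M := by
  have htr (X : Matrix (Fin n) (Fin n) ℝ) : Xᵀ = star X :=
    (conjTranspose_eq_transpose_of_trivial X).symm
  rw [frob, frob, htr, htr, ← map_star, ← map_mul, conjStarAlgAut_apply, trace_mul_cycle,
    star_mul_self_of_mem u.2, one_mul]

theorem frob_le_of_hasDerivAt_exp_diagonal_add_smul {n : ℕ} (d : Fin n → ℝ)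
    (C D : Matrix (Fin n) (Fin n) ℝ)
    (hD : HasDerivAt (fun t : ℝ => exp (diagonal d + t • C)) D 0) :
    frob C ≤ frob (exp (-((1:ℝ)/2) • diagonal d) * D * exp (-((1:ℝ)/2) • diagonal d)) := by
  refine frob_le_frob_of_abs_le fun i j => ?_
  have hDij := (hasDerivAt_pi.1 (hasDerivAt_pi.1 hD i) j).unique
    (hasDerivAt_exp_diagonal_add_smul_apply d C i j)
  simp only [exp_smul_diagonal, diagonal_mul, mul_diagonal, hDij]
  have hc := Real.exp_add_div_two_le_integral_exp (d i) (d j)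
  set c := ∫ s in (0:ℝ)..1, Real.exp (s * d i + (1 - s) * d j)
  have hgain : 1 ≤ Real.exp (-(1 / 2) * d i) * c * Real.exp (-(1 / 2) * d j) :=
    calc 1 = Real.exp (-(1 / 2) * d i) * Real.exp ((d i + d j) / 2) *
          Real.exp (-(1 / 2) * d j) := by
          rw [← Real.exp_add, ← Real.exp_add, eq_comm, Real.exp_eq_one_iff]; ring
      _ ≤ _ := by gcongr
  calc |C i j| = 1 * |C i j| := (one_mul _).symm
    _ ≤ (Real.exp (-(1 / 2) * d i) * c * Real.exp (-(1 / 2) * d j)) * |C i j| := by gcongr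
    _ = _ := by
      rw [abs_mul, abs_mul, abs_mul, abs_of_pos (Real.exp_pos _), abs_of_pos (Real.exp_pos _),
        abs_of_pos ((Real.exp_pos _).trans_le hc)]
      ring

theorem stmt2_general {n : ℕ} (A B D : Matrix (Fin n) (Fin n) ℝ)
    (hA : A.IsHermitian)
    (hD : HasDerivAt (fun t : ℝ => exp (A + t • B)) D 0) :
    frob B ≤ frob (exp (-((1:ℝ)/2) • A) * D * exp (-((1:ℝ)/2) • A)) := by
  set ψ := conjStarAlgAut ℝ (Matrix (Fin n) (Fin n) ℝ) (star hA.eigenvectorUnitary)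
  have hψA : ψ A = diagonal hA.eigenvalues := by
    rw [hA.conjStarAlgAut_star_eigenvectorUnitary, RCLike.ofReal_real_eq_id, Function.id_comp]
  have hψD : HasDerivAt (fun t : ℝ => exp (diagonal hA.eigenvalues + t • ψ B)) (ψ D) 0 := by
    have h : HasDerivAt (fun t : ℝ => ψ (exp (A + t • B))) (ψ D) 0 :=
      (LinearMap.toContinuousLinearMap ψ.toAlgEquiv.toLinearMap).hasFDerivAt.comp_hasDerivAt 0 hD
    refine h.congr_of_eventuallyEq (Filter.Eventually.of_forall fun t => ?_)
    dsimp only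
    rw [← hψA, ← map_smul, ← map_add, exp_conjStarAlgAut]
  calc frob B = frob (ψ B) := (frob_conjStarAlgAut _ B).symm
    _ ≤ _ := frob_le_of_hasDerivAt_exp_diagonal_add_smul _ _ _ hψD
    _ = frob (ψ (exp (-((1:ℝ)/2) • A) * D * exp (-((1:ℝ)/2) • A))) := by
      rw [map_mul, map_mul, ← exp_conjStarAlgAut, map_smul, hψA]
    _ = _ := frob_conjStarAlgAut _ _

/-- Infinitesimal exponential metric increasing property: for real symmetric matrices `A`, `B`,
if `D = D e^A(B)` is the derivative of the matrix exponential at `A` in direction `B`, then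
`‖B‖_F ≤ ‖e^{−A/2} · D · e^{−A/2}‖_F`. -/
theorem stmt2 {n : ℕ} (A B D : Matrix (Fin n) (Fin n) ℝ)
    (hA : A.IsHermitian) (hB : B.IsHermitian)
    (hD : HasDerivAt (fun t : ℝ => exp (A + t • B)) D 0) :
    frob B ≤ frob (exp (-((1:ℝ)/2) • A) * D * exp (-((1:ℝ)/2) • A)) :=
  stmt2_general A B D hA hD
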